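/- arXiv:2603.03496 — 8 statements merged into one kernel-verified Lean document; each statement's English description precedes it below -/
import Mathlib

section
/- Let θ : Fin N → ℂ be any vector, let M, F ⊆ Fin N be finite index sets with |M| = χ ≥ 1 and |F| = k ≥ χ, and suppose F is a set of heaviest indices of θ, i.e. |θ(y)| ≤ |θ(x)| for every x ∈ F and every y ∉ F. Then Σ_{x ∈ M \ F} |θ(x)|² ≤ (χ/k) · Σ_{x ∉ M} |θ(x)|². -/
open Matrix Finset

/-- The core combinatorial estimate of Lemma 2 of the truncated power method
analysis: the weight of the target support `M` missed by the truncation set `F`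
of heaviest indices is at most a `(χ/k)`-fraction of the weight outside `M`. -/
theorem truncation_missed_weight {N : ℕ} (θ : Fin N → ℂ)
    (M F : Finset (Fin N)) (χ k : ℕ)
    (hM : M.card = χ) (hχ : 1 ≤ χ) (hF : F.card = k) (hk : χ ≤ k)
    (hheavy : ∀ x ∈ F, ∀ y ∉ F, ‖θ y‖ ≤ ‖θ x‖) :
    ∑ x ∈ M \ F, ‖θ x‖ ^ 2 ≤
      (χ : ℝ) / (k : ℝ) * ∑ x ∈ Mᶜ, ‖θ x‖ ^ 2 := by
  set a : Fin N → ℝ := fun x => ‖θ x‖ ^ 2 with ha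
  have hanonneg : ∀ x, 0 ≤ a x := fun x => by positivity
  have hS3 : (0:ℝ) ≤ ∑ x ∈ Mᶜ, a x := Finset.sum_nonneg fun x _ => hanonneg x
  have hkpos : (0:ℝ) < k := by exact_mod_cast lt_of_lt_of_le hχ hk
  by_cases hFM : F \ M = ∅
  · have hsub : F ⊆ M := sdiff_eq_empty_iff_subset.mp hFM
    have hFE : F = M := Finset.eq_of_subset_of_card_le hsub (by omega)
    rw [hFE, sdiff_self]
    simp only [Finset.bot_eq_empty, Finset.sum_empty]
    exact mul_nonneg (div_nonneg (by positivity) (by positivity)) hS3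
  · set t := (M ∩ F).card with ht
    have htM : t ≤ χ := hM ▸ Finset.card_le_card (Finset.inter_subset_left)
    have htF : t ≤ k := hF ▸ Finset.card_le_card (Finset.inter_subset_right)
    have hmf : (M \ F).card = χ - t := by
      have := Finset.card_sdiff_add_card_inter M F
      omega
    have hfm : (F \ M).card = k - t := by
      have := Finset.card_sdiff_add_card_inter F M
      rw [Finset.inter_comm] at this
      omega
    have hfmpos : 0 < (F \ M).card := Finset.card_pos.mpr (Finset.nonempty_iff_ne_empty.mpr hFM)
    -- key pairwise estimate
    have key : ((F \ M).card : ℝ) * ∑ x ∈ M \ F, a x ≤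
        ((M \ F).card : ℝ) * ∑ y ∈ F \ M, a y := by
      have h1 : ∑ x ∈ M \ F, ∑ y ∈ F \ M, a x ≤ ∑ x ∈ M \ F, ∑ y ∈ F \ M, a y := by
        refine Finset.sum_le_sum fun x hx => Finset.sum_le_sum fun y hy => ?_
        have hxF : x ∉ F := (Finset.mem_sdiff.mp hx).2
        have hyF : y ∈ F := (Finset.mem_sdiff.mp hy).1
        have := hheavy y hyF x hxF
        have h0 : 0 ≤ ‖θ x‖ := norm_nonneg _
        simp only [ha]
        nlinarith
      simpa [Finset.sum_const, nsmul_eq_mul, Finset.mul_sum, mul_comm] using h1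
    -- cardinality inequality: (χ - t) * k ≤ χ * (k - t)
    have hcard : ((M \ F).card : ℝ) * k ≤ (χ : ℝ) * (F \ M).card := by
      rw [hmf, hfm]
      rw [Nat.cast_sub htM, Nat.cast_sub htF]
      have : (t:ℝ) * χ ≤ (t:ℝ) * k := by
        apply mul_le_mul_of_nonneg_left (by exact_mod_cast hk) (by positivity)
      nlinarith
    have hsub2 : F \ M ⊆ Mᶜ := fun x hx => by
      simp only [Finset.mem_compl]
      exact (Finset.mem_sdiff.mp hx).2
    have hS2 : ∑ y ∈ F \ M, a y ≤ ∑ x ∈ Mᶜ, a x :=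
      Finset.sum_le_sum_of_subset_of_nonneg hsub2 fun x _ _ => hanonneg x
    have hfmR : (0:ℝ) < (F \ M).card := by exact_mod_cast hfmpos
    rw [div_mul_eq_mul_div, le_div_iff₀ hkpos]
    have hS1 : (0:ℝ) ≤ ∑ x ∈ M \ F, a x := Finset.sum_nonneg fun x _ => hanonneg x
    have hS2' : (0:ℝ) ≤ ∑ y ∈ F \ M, a y := Finset.sum_nonneg fun x _ => hanonneg x
    have hmfR : (0:ℝ) ≤ ((M \ F).card : ℝ) := by positivity
    have hχR : (0:ℝ) ≤ (χ:ℝ) := by positivity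
    nlinarith [mul_le_mul_of_nonneg_left hS2 hχR,
      mul_le_mul_of_nonneg_right hcard hS2',
      mul_le_mul_of_nonneg_left key (le_of_lt hkpos)]
end

section
/- Let θ ∈ ℂ^N be a unit vector and let ψ ∈ ℂ^N be a unit vector supported on a set M ⊆ Fin N with |M| = χ ≥ 1 (i.e. ψ(x) = 0 for all x ∉ M). Let k ≥ χ be an integer, let F ⊆ Fin N with |F| = k be a set of heaviest indices of θ, and define ω ∈ ℂ^N by ω(x) = θ(x) for x ∈ F and ω(x) = 0 otherwise. Then |⟨ψ, ω⟩| ≥ |⟨ψ, θ⟩| − √(χ/k) · √(1 − |⟨ψ, θ⟩|²). -/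
open Matrix Finset

/-- The standard Hermitian inner product on `ι → ℂ`, conjugate-linear in the
first argument. -/
noncomputable def cinner {ι : Type*} [Fintype ι] (v w : ι → ℂ) : ℂ :=
  ∑ i, (starRingEnd ℂ) (v i) * w i

/-- The Euclidean norm on `ι → ℂ`. -/
noncomputable def cnorm {ι : Type*} [Fintype ι] (v : ι → ℂ) : ℝ :=
  Real.sqrt (∑ i, Complex.normSq (v i))

/-- Cauchy–Schwarz for partial complex sums. -/
lemma abs_sum_le_sqrt_mul_sqrt {ι : Type*} (s : Finset ι) (v w : ι → ℂ) :
    ‖∑ x ∈ s, (starRingEnd ℂ) (v x) * w x‖ ≤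
      Real.sqrt (∑ x ∈ s, Complex.normSq (v x)) *
        Real.sqrt (∑ x ∈ s, Complex.normSq (w x)) := by
  have h1 : ‖∑ x ∈ s, (starRingEnd ℂ) (v x) * w x‖ ≤
      ∑ x ∈ s, ‖v x‖ * ‖w x‖ := by
    refine (norm_sum_le _ _).trans_eq (Finset.sum_congr rfl fun x _ => ?_)
    rw [norm_mul, Complex.norm_conj]
  have h2 : (∑ x ∈ s, ‖v x‖ * ‖w x‖) ^ 2 ≤
      (∑ x ∈ s, ‖v x‖ ^ 2) * ∑ x ∈ s, ‖w x‖ ^ 2 :=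
    Finset.sum_mul_sq_le_sq_mul_sq s _ _
  have hnn : 0 ≤ ∑ x ∈ s, ‖v x‖ * ‖w x‖ :=
    Finset.sum_nonneg fun x _ => mul_nonneg (norm_nonneg _) (norm_nonneg _)
  have h3 : ∑ x ∈ s, ‖v x‖ * ‖w x‖ ≤
      Real.sqrt ((∑ x ∈ s, ‖v x‖ ^ 2) * ∑ x ∈ s, ‖w x‖ ^ 2) := by
    rw [show (∑ x ∈ s, ‖v x‖ * ‖w x‖) =
        Real.sqrt ((∑ x ∈ s, ‖v x‖ * ‖w x‖) ^ 2) from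
      (Real.sqrt_sq hnn).symm]
    exact Real.sqrt_le_sqrt h2
  have h4 : Real.sqrt ((∑ x ∈ s, ‖v x‖ ^ 2) * ∑ x ∈ s, ‖w x‖ ^ 2) =
      Real.sqrt (∑ x ∈ s, Complex.normSq (v x)) * Real.sqrt (∑ x ∈ s, Complex.normSq (w x)) := by
    rw [Real.sqrt_mul (Finset.sum_nonneg fun x _ => sq_nonneg _)]
    congr 1 <;> · congr 1; exact Finset.sum_congr rfl fun x _ => Complex.sq_norm _
  calc ‖∑ x ∈ s, (starRingEnd ℂ) (v x) * w x‖ ≤ _ := h1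
    _ ≤ _ := h3
    _ = _ := h4

/-- Lemma 2 of the truncated power method analysis: truncating a unit vector to
its `k` heaviest coordinates cannot reduce its overlap with a `χ`-sparse unit
vector by more than `√(χ/k)·√(1−|overlap|²)`. -/
theorem truncation_overlap_bound {N : ℕ} (θ ψ : Fin N → ℂ)
    (hθ : cnorm θ = 1) (hψ : cnorm ψ = 1)
    (M : Finset (Fin N)) (χ : ℕ) (hM : M.card = χ) (hχ : 1 ≤ χ)
    (hsupp : ∀ x ∉ M, ψ x = 0)
    (k : ℕ) (hk : χ ≤ k)
    (F : Finset (Fin N)) (hF : F.card = k)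
    (hheavy : ∀ x ∈ F, ∀ y ∉ F, ‖θ y‖ ≤ ‖θ x‖)
    (ω : Fin N → ℂ) (hω : ω = fun x => if x ∈ F then θ x else 0) :
    ‖cinner ψ θ‖ -
        Real.sqrt ((χ : ℝ) / (k : ℝ)) * Real.sqrt (1 - ‖cinner ψ θ‖ ^ 2) ≤
      ‖cinner ψ ω‖ := by
  classical
  have hkpos : 0 < (k : ℝ) := by exact_mod_cast lt_of_lt_of_le hχ hk
  -- squared-norm facts
  have hθ2 : ∑ i, Complex.normSq (θ i) = 1 := by
    have := hθ; unfold cnorm at this; exact Real.sqrt_eq_one.mp this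
  have hψ2 : ∑ i, Complex.normSq (ψ i) = 1 := by
    have := hψ; unfold cnorm at this; exact Real.sqrt_eq_one.mp this
  set c := cinner ψ θ with hc
  set S : ℂ := ∑ x ∈ M \ F, (starRingEnd ℂ) (ψ x) * θ x with hS
  -- c restricted to M
  have hcM : c = ∑ x ∈ M, (starRingEnd ℂ) (ψ x) * θ x := by
    rw [hc]; unfold cinner
    exact (Finset.sum_subset (Finset.subset_univ M) (fun x _ hx => by
      rw [hsupp x hx]; simp)).symm
  have hψ2M : ∑ x ∈ M, Complex.normSq (ψ x) = 1 := by
    rw [← hψ2]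
    exact Finset.sum_subset (Finset.subset_univ M) (fun x _ hx => by
      rw [hsupp x hx]; simp)
  -- |c| ≤ sqrt of mass of θ on M
  have hcle : ‖c‖ ≤ Real.sqrt (∑ x ∈ M, Complex.normSq (θ x)) := by
    calc ‖c‖ ≤ _ := hcM ▸ abs_sum_le_sqrt_mul_sqrt M ψ θ
      _ = Real.sqrt (∑ x ∈ M, Complex.normSq (θ x)) := by rw [hψ2M, Real.sqrt_one, one_mul]
  have hθMle : ∑ x ∈ M, Complex.normSq (θ x) ≤ 1 := by
    rw [← hθ2]
    exact Finset.sum_le_sum_of_subset_of_nonneg (Finset.subset_univ M)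
      (fun x _ _ => Complex.normSq_nonneg _)
  have hc2 : ‖c‖ ^ 2 ≤ ∑ x ∈ M, Complex.normSq (θ x) := by
    have h0 : 0 ≤ ∑ x ∈ M, Complex.normSq (θ x) :=
      Finset.sum_nonneg fun x _ => Complex.normSq_nonneg _
    nlinarith [Real.sq_sqrt h0, norm_nonneg c, Real.sqrt_nonneg
      (∑ x ∈ M, Complex.normSq (θ x))]
  have hc1 : ‖c‖ ^ 2 ≤ 1 := hc2.trans hθMle
  -- split cinner ψ ω
  have hsplit : cinner ψ ω = c - S := by
    have h1 : cinner ψ ω = ∑ x ∈ F, (starRingEnd ℂ) (ψ x) * θ x := by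
      unfold cinner; rw [hω]
      rw [← Finset.sum_subset (Finset.subset_univ F) (fun x _ hx => by simp [hx])]
      exact Finset.sum_congr rfl fun x hx => by simp [hx]
    have h2 : c = (∑ x ∈ F, (starRingEnd ℂ) (ψ x) * θ x) +
        ∑ x ∈ Fᶜ, (starRingEnd ℂ) (ψ x) * θ x := by
      rw [hc]; unfold cinner; rw [Finset.sum_add_sum_compl]
    have h3 : S = ∑ x ∈ Fᶜ, (starRingEnd ℂ) (ψ x) * θ x := by
      rw [hS]
      refine Finset.sum_subset ?_ (fun x hx hx2 => ?_)
      · intro x hx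
        simp only [Finset.mem_sdiff] at hx
        simpa using hx.2
      · have hxM : x ∉ M := by
          simp only [Finset.mem_compl] at hx
          simp only [Finset.mem_sdiff] at hx2
          tauto
        rw [hsupp x hxM]; simp
    rw [h1, h2, h3]; ring
  -- Cauchy-Schwarz on S
  set B : ℝ := ∑ x ∈ M \ F, Complex.normSq (θ x) with hB
  have hBnn : 0 ≤ B := Finset.sum_nonneg fun x _ => Complex.normSq_nonneg _
  have hSle : ‖S‖ ≤ Real.sqrt B := by
    calc ‖S‖ ≤ _ := abs_sum_le_sqrt_mul_sqrt (M \ F) ψ θ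
      _ ≤ 1 * Real.sqrt B := by
        gcongr
        rw [show (1:ℝ) = Real.sqrt 1 from Real.sqrt_one.symm]
        apply Real.sqrt_le_sqrt
        rw [← hψ2M]
        exact Finset.sum_le_sum_of_subset_of_nonneg (Finset.sdiff_subset)
          (fun x _ _ => Complex.normSq_nonneg _)
      _ = Real.sqrt B := one_mul _
  -- the key bound on B
  have hBbound : B ≤ (χ : ℝ) / k * (1 - ‖c‖ ^ 2) := by
    rcases Finset.eq_empty_or_nonempty (M \ F) with he | hne
    · rw [hB, he, Finset.sum_empty]
      have : (0:ℝ) ≤ (χ : ℝ) / k := by positivity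
      nlinarith
    · -- cardinalities
      have hcard : (M \ F).card + (M ∩ F).card = χ := by
        rw [Finset.card_sdiff_add_card_inter, hM]
      have hcardF : (F \ M).card + (F ∩ M).card = k := by
        rw [Finset.card_sdiff_add_card_inter, hF]
      have hineq : (M \ F).card * k ≤ χ * (F \ M).card := by
        have hIM : (M ∩ F).card = (F ∩ M).card := by rw [Finset.inter_comm]
        set a := (F ∩ M).card
        have h1 : (M \ F).card = χ - a := by omega
        have h2 : (F \ M).card = k - a := by omega
        have ha : a ≤ χ := by omega
        have hak : a ≤ k := le_trans ha hk
        have h3 : χ * a ≤ a * k := by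
          calc χ * a = a * χ := Nat.mul_comm _ _
            _ ≤ a * k := Nat.mul_le_mul_left a hk
        rw [h1, h2]
        zify [ha, hak]
        have h3' : (χ:ℤ) * a ≤ (a:ℤ) * k := by exact_mod_cast h3
        nlinarith [h3']
      -- F \ M nonempty
      have hFMne : (F \ M).Nonempty := by
        rw [← Finset.card_pos]
        have h1 : 1 ≤ (M \ F).card := Finset.card_pos.mpr hne
        have h2 : (M ∩ F).card = (F ∩ M).card := by rw [Finset.inter_comm]
        omega
      obtain ⟨y₀, hy₀, hy₀min⟩ := Finset.exists_min_image (F \ M)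
        (fun y => Complex.normSq (θ y)) hFMne
      set m := Complex.normSq (θ y₀) with hm
      have hy₀F : y₀ ∈ F := (Finset.mem_sdiff.mp hy₀).1
      have hBm : B ≤ (M \ F).card * m := by
        rw [hB]
        calc ∑ x ∈ M \ F, Complex.normSq (θ x) ≤ ∑ _x ∈ M \ F, m := by
              refine Finset.sum_le_sum fun x hx => ?_
              have hxF : x ∉ F := (Finset.mem_sdiff.mp hx).2
              have := hheavy y₀ hy₀F x hxF
              rw [hm, ← Complex.sq_norm, ← Complex.sq_norm]
              exact pow_le_pow_left₀ (norm_nonneg _) this 2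
          _ = (M \ F).card * m := by rw [Finset.sum_const, nsmul_eq_mul]
      have htm : ((F \ M).card : ℝ) * m ≤ 1 - ‖c‖ ^ 2 := by
        have h1 : ((F \ M).card : ℝ) * m ≤ ∑ x ∈ F \ M, Complex.normSq (θ x) := by
          rw [show ((F \ M).card : ℝ) * m = ∑ _x ∈ F \ M, m by
            rw [Finset.sum_const, nsmul_eq_mul]]
          exact Finset.sum_le_sum fun x hx => hy₀min x hx
        have h2 : ∑ x ∈ F \ M, Complex.normSq (θ x) ≤ ∑ x ∈ Mᶜ, Complex.normSq (θ x) := by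
          refine Finset.sum_le_sum_of_subset_of_nonneg ?_
            (fun x _ _ => Complex.normSq_nonneg _)
          intro x hx
          simp only [Finset.mem_compl]
          exact (Finset.mem_sdiff.mp hx).2
        have h3 : ∑ x ∈ Mᶜ, Complex.normSq (θ x) = 1 - ∑ x ∈ M, Complex.normSq (θ x) := by
          have := Finset.sum_add_sum_compl M (fun x => Complex.normSq (θ x))
          rw [hθ2] at this
          linarith
        linarith
      have hmnn : 0 ≤ m := Complex.normSq_nonneg _
      have hineqR : ((M \ F).card : ℝ) * k ≤ (χ : ℝ) * (F \ M).card := by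
        exact_mod_cast hineq
      have hsnn : (0:ℝ) ≤ ((M \ F).card : ℝ) := Nat.cast_nonneg _
      have : B * k ≤ (χ : ℝ) * (((F \ M).card : ℝ) * m) := by
        nlinarith [mul_le_mul_of_nonneg_right hineqR hmnn, hkpos.le, hBm, hmnn, hsnn]
      rw [div_mul_eq_mul_div, le_div_iff₀ hkpos]
      calc B * k ≤ (χ : ℝ) * ((F \ M).card * m) := this
        _ ≤ (χ : ℝ) * (1 - ‖c‖ ^ 2) := by
            have hχnn : (0:ℝ) ≤ χ := by positivity
            exact mul_le_mul_of_nonneg_left htm hχnn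
  -- finish
  have hSfin : ‖S‖ ≤ Real.sqrt ((χ:ℝ)/k) * Real.sqrt (1 - ‖c‖ ^ 2) := by
    calc ‖S‖ ≤ Real.sqrt B := hSle
      _ ≤ Real.sqrt ((χ:ℝ)/k * (1 - ‖c‖ ^ 2)) := Real.sqrt_le_sqrt hBbound
      _ = _ := Real.sqrt_mul (by positivity) _
  have htri : ‖c‖ - ‖S‖ ≤ ‖cinner ψ ω‖ := by
    rw [hsplit]
    have := norm_sub_le c S
    have h2 := norm_add_le (c - S) S
    simp only [sub_add_cancel] at h2
    linarith
  linarith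
end

section
/- Let θ ∈ ℂ^N be a unit vector and ψ ∈ ℂ^N a unit vector supported on a set M with |M| = χ ≥ 1. Let k ≥ χ, set ρ = √(χ/k), let F ⊆ Fin N with |F| = k be a set of heaviest indices of θ, and define ω by ω(x) = θ(x) for x ∈ F and ω(x) = 0 otherwise. Assume ⟨ψ, θ⟩ ≠ 0 and ρ · T(θ) < 1, where T(θ) = √(1 − |⟨ψ, θ⟩|²)/|⟨ψ, θ⟩|. Then ⟨ψ, ω⟩ ≠ 0 and T(ω) ≤ (T(θ) + ρ)/(1 − ρ · T(θ)), where T(ω) = ‖ω − ⟨ψ, ω⟩ψ‖/|⟨ψ, ω⟩|. -/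
set_option maxHeartbeats 1600000 in
open Matrix Finset

private def toE {n : ℕ} (v : Fin n → ℂ) : EuclideanSpace ℂ (Fin n) := WithLp.toLp 2 v

private lemma cinner_eq {n : ℕ} (v w : Fin n → ℂ) :
    cinner v w = inner (𝕜 := ℂ) (toE v) (toE w) := by
  simp [cinner, toE, PiLp.inner_apply, RCLike.inner_apply, mul_comm]

private lemma cnorm_eq {n : ℕ} (v : Fin n → ℂ) : cnorm v = ‖toE v‖ := by
  rw [cnorm, EuclideanSpace.norm_eq]
  congr 1
  exact Finset.sum_congr rfl fun i _ => by
    rw [Complex.normSq_eq_norm_sq]; rfl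

private lemma cnorm_sq_eq {n : ℕ} (v : Fin n → ℂ) :
    (cnorm v)^2 = ∑ i, Complex.normSq (v i) :=
  Real.sq_sqrt (Finset.sum_nonneg fun i _ => Complex.normSq_nonneg _)

private lemma cnorm_nonneg {n : ℕ} (v : Fin n → ℂ) : 0 ≤ cnorm v :=
  Real.sqrt_nonneg _

private lemma cinner_add_right {n : ℕ} (v w₁ w₂ : Fin n → ℂ) :
    cinner v (w₁ + w₂) = cinner v w₁ + cinner v w₂ := by
  simp [cinner, mul_add, Finset.sum_add_distrib]

private lemma le_of_sq_le_sq' (a b : ℝ) (h : a^2 ≤ b^2) (ha : 0 ≤ a) (hb : 0 ≤ b) :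
    a ≤ b := by
  nlinarith [sq_nonneg (a - b), sq_nonneg (a + b)]

private lemma norm_perp_sq {n : ℕ} (ψ ω : Fin n → ℂ) (hψ : cnorm ψ = 1) :
    (cnorm (ω - cinner ψ ω • ψ))^2 = (cnorm ω)^2 - (‖cinner ψ ω‖)^2 := by
  set a : ℂ := cinner ψ ω with ha
  have haE : a = inner (𝕜 := ℂ) (toE ψ) (toE ω) := cinner_eq ψ ω
  rw [cnorm_eq, cnorm_eq]
  have hψE : ‖toE ψ‖ = 1 := by rw [← cnorm_eq]; exact hψ
  have hsub : toE (ω - a • ψ) = toE ω - a • toE ψ := rfl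
  have h1 : ‖toE ω - a • toE ψ‖^2
      = ‖toE ω‖^2 - 2 * Complex.re (inner (𝕜 := ℂ) (toE ω) (a • toE ψ)) + ‖a • toE ψ‖^2 :=
    norm_sub_sq (𝕜 := ℂ) _ _
  have h2 : inner (𝕜 := ℂ) (toE ω) (a • toE ψ) = a * inner (𝕜 := ℂ) (toE ω) (toE ψ) :=
    inner_smul_right _ _ _
  have h3 : inner (𝕜 := ℂ) (toE ω) (toE ψ) = (starRingEnd ℂ) a := by
    rw [haE, ← inner_conj_symm]
  have h4 : Complex.re (a * (starRingEnd ℂ) a) = (‖a‖)^2 := by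
    rw [Complex.mul_conj]
    simp [Complex.normSq_eq_norm_sq, ← Complex.ofReal_pow]
  have h5 : ‖a • toE ψ‖ = ‖a‖ := by
    rw [norm_smul, hψE, mul_one]
  rw [hsub, h1, h2, h3, h4, h5]
  ring

private lemma P1_lemma {n : ℕ} (ψ ω e : Fin n → ℂ) (hψ : cnorm ψ = 1)
    (hortho : cinner ω e = 0) :
    ‖cinner ψ (ω + e)‖ * (cnorm ω)^2 ≤
      ‖cinner ψ ω‖ * (cnorm ω)^2
      + cnorm ω * cnorm (ω - cinner ψ ω • ψ) * cnorm e := by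
  set a : ℂ := cinner ψ ω with ha
  set w : ℝ := cnorm ω with hw
  set Nr : ℝ := cnorm (ω - a • ψ) with hNr
  have hw0 : 0 ≤ w := Real.sqrt_nonneg _
  have hN0 : 0 ≤ Nr := Real.sqrt_nonneg _
  have hψE : ‖toE ψ‖ = 1 := by rw [← cnorm_eq]; exact hψ
  have haE : a = inner (𝕜 := ℂ) (toE ψ) (toE ω) := cinner_eq ψ ω
  have hNsq : Nr^2 = w^2 - (‖a‖)^2 := norm_perp_sq ψ ω hψ
  set V : EuclideanSpace ℂ (Fin n) :=
    ((w^2 : ℝ) : ℂ) • toE ψ - (starRingEnd ℂ) a • toE ω with hV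
  have horthoE : inner (𝕜 := ℂ) (toE ω) (toE e) = 0 := by
    rw [← cinner_eq]; exact hortho
  have hVe : inner (𝕜 := ℂ) V (toE e)
      = ((w^2 : ℝ) : ℂ) * inner (𝕜 := ℂ) (toE ψ) (toE e) := by
    rw [hV, inner_sub_left, inner_smul_left, inner_smul_left, horthoE,
      mul_zero, sub_zero, Complex.conj_ofReal]
  have hVnorm2 : ‖V‖^2 = w^2 * Nr^2 := by
    rw [hV, norm_sub_sq (𝕜 := ℂ)]
    have e1 : ‖((w^2 : ℝ) : ℂ) • toE ψ‖ = w^2 := by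
      rw [norm_smul, hψE, mul_one, Complex.norm_of_nonneg (sq_nonneg w)]
    have e2 : inner (𝕜 := ℂ) (((w^2 : ℝ) : ℂ) • toE ψ) ((starRingEnd ℂ) a • toE ω)
        = ((w^2 : ℝ) : ℂ) * ((starRingEnd ℂ) a * a) := by
      rw [inner_smul_left, inner_smul_right, Complex.conj_ofReal, ← haE]
    have e3 : Complex.re (((w^2 : ℝ) : ℂ) * ((starRingEnd ℂ) a * a))
        = w^2 * (‖a‖)^2 := by
      have : (starRingEnd ℂ) a * a = ((‖a‖)^2 : ℝ) := by
        rw [mul_comm, Complex.mul_conj]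
        simp [Complex.normSq_eq_norm_sq]
      rw [this, ← Complex.ofReal_mul]
      exact Complex.ofReal_re _
    have e4 : ‖(starRingEnd ℂ) a • toE ω‖ = ‖a‖ * w := by
      rw [norm_smul, Complex.norm_conj, ← cnorm_eq]
    simp only [RCLike.re_to_complex]
    rw [e1, e2, e3, e4]
    nlinarith [hNsq]
  have hVn : ‖V‖ = w * Nr := by
    have h := congrArg Real.sqrt (by rw [hVnorm2]; ring : ‖V‖^2 = (w * Nr)^2)
    rwa [Real.sqrt_sq (norm_nonneg V), Real.sqrt_sq (mul_nonneg hw0 hN0)] at h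
  have hCS : ‖inner (𝕜 := ℂ) V (toE e)‖ ≤ ‖V‖ * ‖toE e‖ := norm_inner_le_norm _ _
  have hIe : w^2 * ‖cinner ψ e‖ ≤ w * Nr * cnorm e := by
    have lhs : ‖inner (𝕜 := ℂ) V (toE e)‖ = w^2 * ‖cinner ψ e‖ := by
      rw [hVe, norm_mul, Complex.norm_of_nonneg (sq_nonneg w), cinner_eq]
    rw [lhs, hVn, ← cnorm_eq] at hCS
    exact hCS
  have hadd : cinner ψ (ω + e) = a + cinner ψ e := by
    rw [cinner_add_right, ha]
  have habs : ‖cinner ψ (ω + e)‖ ≤ ‖a‖ + ‖cinner ψ e‖ := by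
    rw [hadd]; exact norm_add_le _ _
  have := mul_le_mul_of_nonneg_right habs (sq_nonneg w)
  nlinarith [hIe, this]

set_option maxHeartbeats 1000000 in
private lemma tangent_algebra (c s w t η D N ρ Tθ : ℝ)
    (hc : 0 < c) (hw : 0 < w) (hD0 : 0 ≤ D) (hN0 : 0 ≤ N) (ht0 : 0 ≤ t)
    (hρ0 : 0 ≤ ρ) (hs0 : 0 ≤ s) (hη0 : 0 ≤ η)
    (hη2 : η^2 = w^2 + t^2 - c^2) (hs2 : s^2 = 1 - c^2)
    (hu1 : w^2 + t^2 ≤ 1)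
    (htρ : t ≤ ρ * w)
    (hP1 : c * w ≤ D * w + t * N)
    (hN2 : N^2 = w^2 - D^2)
    (hTθ : Tθ = s / c)
    (hsmall : ρ * Tθ < 1) :
    0 < D ∧ N / D ≤ (Tθ + ρ) / (1 - ρ * Tθ) := by
  have hρw : (0:ℝ) ≤ ρ * w := mul_nonneg hρ0 hw.le
  have hηs : η ≤ s := le_of_sq_le_sq' _ _ (by nlinarith) hη0 hs0
  have hTc : Tθ * c = s := by rw [hTθ]; field_simp
  have hρs : ρ * s < c := by nlinarith [hTc]
  have hwt2 : (0:ℝ) < w^2 + t^2 := by nlinarith [mul_pos hw hw, sq_nonneg t]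
  have hA : 0 < c * w - t * η := by
    nlinarith [mul_le_mul htρ hηs hη0 hρw, mul_lt_mul_of_pos_left hρs hw]
  have hwtη : (0:ℝ) ≤ w * t * η := mul_nonneg (mul_nonneg hw.le ht0) hη0
  have KEY : w * (c * w - t * η) ≤ D * (w^2 + t^2) := by
    rcases le_or_gt c D with h | h
    · nlinarith [hwtη, sq_nonneg t,
        mul_nonneg (sub_nonneg.2 h) hwt2.le]
    · have h1 : (c - D) * w ≤ t * N := by nlinarith
      have h2' : ((c - D) * w)^2 ≤ t^2 * (w^2 - D^2) := by
        calc ((c - D) * w)^2 ≤ (t * N)^2 :=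
              pow_le_pow_left₀ (mul_nonneg (by linarith) hw.le) h1 2
          _ = t^2 * (w^2 - D^2) := by rw [mul_pow, hN2]
      have h3 : (D * (w^2 + t^2) - c * w^2)^2 ≤ w^2 * t^2 * (w^2 + t^2 - c^2) := by
        nlinarith [mul_le_mul_of_nonneg_left h2' hwt2.le]
      have h3' : (D * (w^2 + t^2) - c * w^2)^2 ≤ (w * t * η)^2 := by
        calc (D * (w^2 + t^2) - c * w^2)^2 ≤ w^2 * t^2 * (w^2 + t^2 - c^2) := h3
          _ = (w * t * η)^2 := by rw [mul_pow, mul_pow, hη2]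
      have h4 : |D * (w^2 + t^2) - c * w^2| ≤ w * t * η :=
        le_of_sq_le_sq' _ _ (by rwa [sq_abs]) (abs_nonneg _) hwtη
      have h5 := neg_abs_le (D * (w^2 + t^2) - c * w^2)
      nlinarith [h4, h5]
  have hDpos : 0 < D := by
    nlinarith [mul_pos hw hA, hwt2]
  refine ⟨hDpos, ?_⟩
  have hP : 0 < 1 - ρ * Tθ := by linarith
  have hTθ0 : 0 ≤ Tθ := hTθ ▸ div_nonneg hs0 hc.le
  set τ : ℝ := (Tθ + ρ) / (1 - ρ * Tθ) with hτ
  have hτ0 : 0 ≤ τ := div_nonneg (by linarith) hP.le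
  have e1 : η * w + c * t ≤ (Tθ + ρ) * (c * w) := by
    nlinarith [mul_le_mul_of_nonneg_right hηs hw.le,
      mul_le_mul_of_nonneg_left htρ hc.le, hTc]
  have e2 : (c * w) * (1 - ρ * Tθ) ≤ c * w - t * η := by
    nlinarith [mul_le_mul htρ hηs hη0 hρw, hTc]
  have step1 : (η * w + c * t) * (1 - ρ * Tθ) ≤ (Tθ + ρ) * (c * w - t * η) := by
    calc (η * w + c * t) * (1 - ρ * Tθ) ≤ ((Tθ + ρ) * (c * w)) * (1 - ρ * Tθ) :=
          mul_le_mul_of_nonneg_right e1 hP.le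
      _ = (Tθ + ρ) * ((c * w) * (1 - ρ * Tθ)) := by ring
      _ ≤ (Tθ + ρ) * (c * w - t * η) :=
          mul_le_mul_of_nonneg_left e2 (by linarith)
  have step1' : η * w + c * t ≤ τ * (c * w - t * η) := by
    rw [hτ, div_mul_eq_mul_div, le_div_iff₀ hP]
    linarith [step1]
  have k1 : (w * (c * w - t * η))^2 ≤ (D * (w^2 + t^2))^2 :=
    pow_le_pow_left₀ (mul_nonneg hw.le hA.le) KEY 2
  have k2 : (η * w + c * t)^2 ≤ (τ * (c * w - t * η))^2 :=
    pow_le_pow_left₀ (add_nonneg (mul_nonneg hη0 hw.le) (mul_nonneg hc.le ht0)) step1' 2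
  have id1 : (w^2 + t^2)^2 = (c * w - t * η)^2 + (η * w + c * t)^2 := by
    linear_combination (-(w^2 + t^2)) * hη2
  have hQ : (0:ℝ) < (w^2 + t^2)^2 := pow_pos hwt2 2
  have step2 : w^2 ≤ (1 + τ^2) * D^2 := by
    have big : w^2 * (w^2 + t^2)^2 ≤ ((1 + τ^2) * D^2) * (w^2 + t^2)^2 := by
      nlinarith [k1, mul_le_mul_of_nonneg_left k1 (sq_nonneg τ),
        mul_le_mul_of_nonneg_left k2 (sq_nonneg w), id1]
    exact le_of_mul_le_mul_right big hQ
  have step3 : N ≤ τ * D := by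
    apply le_of_sq_le_sq' _ _ _ hN0 (mul_nonneg hτ0 hDpos.le)
    nlinarith [step2, hN2]
  rw [div_le_iff₀ hDpos]
  calc N ≤ τ * D := step3
    _ = (Tθ + ρ) / (1 - ρ * Tθ) * D := by rw [hτ]

set_option maxHeartbeats 1600000 in
/-- The tangent version of the truncation lemma (Lemma 3) in the truncated
power method analysis. -/
theorem truncation_tangent_bound {N : ℕ} (θ ψ : Fin N → ℂ)
    (hθ : cnorm θ = 1) (hψ : cnorm ψ = 1)
    (M : Finset (Fin N)) (χ : ℕ) (hM : M.card = χ) (hχ : 1 ≤ χ)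
    (hsupp : ∀ x ∉ M, ψ x = 0)
    (k : ℕ) (hk : χ ≤ k)
    (ρ : ℝ) (hρ : ρ = Real.sqrt ((χ : ℝ) / (k : ℝ)))
    (F : Finset (Fin N)) (hF : F.card = k)
    (hheavy : ∀ x ∈ F, ∀ y ∉ F, ‖θ y‖ ≤ ‖θ x‖)
    (ω : Fin N → ℂ) (hω : ω = fun x => if x ∈ F then θ x else 0)
    (hne : cinner ψ θ ≠ 0)
    (Tθ : ℝ)
    (hTθ : Tθ = Real.sqrt (1 - ‖cinner ψ θ‖ ^ 2) / ‖cinner ψ θ‖)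
    (hsmall : ρ * Tθ < 1) :
    cinner ψ ω ≠ 0 ∧
      cnorm (ω - cinner ψ ω • ψ) / ‖cinner ψ ω‖ ≤ (Tθ + ρ) / (1 - ρ * Tθ) := by
  classical
  have hk0 : 0 < k := lt_of_lt_of_le hχ hk
  have hkR : (0:ℝ) < (k:ℝ) := by exact_mod_cast hk0
  set c : ℝ := ‖cinner ψ θ‖ with hcdef
  have hcpos : 0 < c := norm_pos_iff.mpr hne
  -- auxiliary vectors
  set ξ : Fin N → ℂ := fun x => if x ∈ F ∪ M then θ x else 0 with hξdef
  set e : Fin N → ℂ := fun x => if x ∈ M \ F then θ x else 0 with hedef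
  have hξe : ξ = ω + e := by
    funext x
    by_cases hxF : x ∈ F <;> by_cases hxM : x ∈ M <;>
      simp [hξdef, hedef, hω, hxF, hxM]
  -- squared norms as sums
  have sumsq : ∀ S : Finset (Fin N),
      (∑ i, Complex.normSq (if i ∈ S then θ i else 0)) = ∑ x ∈ S, Complex.normSq (θ x) := by
    intro S
    simp only [apply_ite Complex.normSq, Complex.normSq_zero]
    rw [Finset.sum_ite_mem, Finset.univ_inter]
  have hw2 : (cnorm ω)^2 = ∑ x ∈ F, Complex.normSq (θ x) := by
    rw [hω, cnorm_sq_eq]; exact sumsq F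
  have ht2 : (cnorm e)^2 = ∑ x ∈ M \ F, Complex.normSq (θ x) := by
    rw [hedef, cnorm_sq_eq]; exact sumsq (M \ F)
  have hu2 : (cnorm ξ)^2 = ∑ x ∈ F ∪ M, Complex.normSq (θ x) := by
    rw [hξdef, cnorm_sq_eq]; exact sumsq (F ∪ M)
  have hsplitsum : ∑ x ∈ F ∪ M, Complex.normSq (θ x)
      = (∑ x ∈ F, Complex.normSq (θ x)) + ∑ x ∈ M \ F, Complex.normSq (θ x) := by
    rw [← Finset.union_sdiff_self_eq_union, Finset.sum_union Finset.disjoint_sdiff]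
  have huwt : (cnorm ξ)^2 = (cnorm ω)^2 + (cnorm e)^2 := by
    rw [hu2, hw2, ht2, hsplitsum]
  have hθ1 : ∑ i, Complex.normSq (θ i) = 1 := by
    have h := cnorm_sq_eq θ; rw [hθ, one_pow] at h; exact h.symm
  have hu1 : (cnorm ξ)^2 ≤ 1 := by
    rw [hu2, ← hθ1]
    exact Finset.sum_le_sum_of_subset_of_nonneg (Finset.subset_univ _)
      (fun i _ _ => Complex.normSq_nonneg _)
  -- the heaviness bound
  have hρ0 : 0 ≤ ρ := hρ ▸ Real.sqrt_nonneg _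
  have hρ2 : ρ^2 = (χ : ℝ) / (k : ℝ) := by
    rw [hρ]; exact Real.sq_sqrt (by positivity)
  have hw2nn : (0:ℝ) ≤ ∑ x ∈ F, Complex.normSq (θ x) :=
    Finset.sum_nonneg fun i _ => Complex.normSq_nonneg _
  have hterm : ∀ y ∈ M \ F, Complex.normSq (θ y) * (k:ℝ) ≤ ∑ x ∈ F, Complex.normSq (θ x) := by
    intro y hy
    have hyF : y ∉ F := (Finset.mem_sdiff.mp hy).2
    have hb := Finset.card_nsmul_le_sum F (fun x => Complex.normSq (θ x))
      (Complex.normSq (θ y)) (fun x hx => by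
        have h := hheavy x hx y hyF
        show Complex.normSq (θ y) ≤ Complex.normSq (θ x)
        rw [Complex.normSq_eq_norm_sq, Complex.normSq_eq_norm_sq]
        exact pow_le_pow_left₀ (norm_nonneg _) h 2)
    rw [hF] at hb
    have : ((k:ℝ)) * Complex.normSq (θ y) ≤ ∑ x ∈ F, Complex.normSq (θ x) := by
      exact_mod_cast (by simpa [nsmul_eq_mul] using hb)
    linarith [this]
  have hcard : (((M \ F).card : ℝ)) ≤ (χ : ℝ) := by
    exact_mod_cast hM ▸ Finset.card_le_card Finset.sdiff_subset
  have ht2sum : (∑ y ∈ M \ F, Complex.normSq (θ y)) * (k:ℝ)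
      ≤ ((M \ F).card : ℝ) * ∑ x ∈ F, Complex.normSq (θ x) := by
    rw [Finset.sum_mul]
    refine le_trans (Finset.sum_le_sum hterm) ?_
    rw [Finset.sum_const, nsmul_eq_mul]
  have ht2ρ : (cnorm e)^2 ≤ ρ^2 * (cnorm ω)^2 := by
    rw [ht2, hw2]
    apply le_of_mul_le_mul_right _ hkR
    have hscale : ρ^2 * (∑ x ∈ F, Complex.normSq (θ x)) * (k:ℝ)
        = (χ:ℝ) * ∑ x ∈ F, Complex.normSq (θ x) := by
      rw [hρ2]; field_simp
    rw [hscale]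
    calc (∑ y ∈ M \ F, Complex.normSq (θ y)) * (k:ℝ)
        ≤ ((M \ F).card : ℝ) * ∑ x ∈ F, Complex.normSq (θ x) := ht2sum
      _ ≤ (χ:ℝ) * ∑ x ∈ F, Complex.normSq (θ x) :=
          mul_le_mul_of_nonneg_right hcard hw2nn
  -- inner product identities
  have hinner1 : cinner ψ ξ = cinner ψ θ := by
    apply Finset.sum_congr rfl
    intro i _
    by_cases hiM : i ∈ M
    · have : ξ i = θ i := by simp [hξdef, Finset.mem_union, hiM]
      rw [this]
    · rw [hsupp i hiM]; simp
  have hortho : cinner ω e = 0 := by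
    apply Finset.sum_eq_zero
    intro i _
    by_cases hiF : i ∈ F
    · have : e i = 0 := by simp [hedef, hiF]
      rw [this, mul_zero]
    · have : ω i = 0 := by rw [hω]; simp [hiF]
      rw [this]; simp
  -- bridge to inner product space facts
  have hNsq := norm_perp_sq ψ ω hψ
  have hP1big := P1_lemma ψ ω e hψ hortho
  have hcξ : ‖cinner ψ (ω + e)‖ = c := by
    rw [← hξe, hinner1]
  rw [hcξ] at hP1big
  have hcu : c ≤ cnorm ξ := by
    have h := norm_inner_le_norm (𝕜 := ℂ) (toE ψ) (toE ξ)
    rw [← cinner_eq, ← cnorm_eq ψ, ← cnorm_eq ξ, hψ, one_mul, hinner1] at h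
    exact h
  have hcu2 : c^2 ≤ (cnorm ω)^2 + (cnorm e)^2 := by
    nlinarith [hcu, hcpos.le, huwt, cnorm_nonneg ξ]
  have hwpos : 0 < cnorm ω := by
    rcases (cnorm_nonneg ω).lt_or_eq with h | h
    · exact h
    · exfalso
      have hw0 : cnorm ω ^ 2 = 0 := by rw [← h]; ring
      rw [hw0, mul_zero] at ht2ρ
      nlinarith [hcu2, ht2ρ, mul_pos hcpos hcpos, hw0]
  have hP1 : c * cnorm ω ≤ ‖cinner ψ ω‖ * cnorm ω
      + cnorm e * cnorm (ω - cinner ψ ω • ψ) := by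
    apply le_of_mul_le_mul_right _ hwpos
    nlinarith [hP1big]
  have hwt1 : (cnorm ω)^2 + (cnorm e)^2 ≤ 1 := by linarith [hu1, huwt]
  have htρ : cnorm e ≤ ρ * cnorm ω :=
    le_of_sq_le_sq' _ _ (by nlinarith [ht2ρ]) (cnorm_nonneg e)
      (mul_nonneg hρ0 hwpos.le)
  obtain ⟨hD, hfin⟩ := tangent_algebra c (Real.sqrt (1 - c^2)) (cnorm ω) (cnorm e)
      (Real.sqrt ((cnorm ω)^2 + (cnorm e)^2 - c^2)) (‖cinner ψ ω‖)
      (cnorm (ω - cinner ψ ω • ψ)) ρ Tθ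
      hcpos hwpos (norm_nonneg _) (cnorm_nonneg _) (cnorm_nonneg _)
      hρ0 (Real.sqrt_nonneg _) (Real.sqrt_nonneg _)
      (Real.sq_sqrt (by linarith [hcu2]))
      (Real.sq_sqrt (by nlinarith [hcu2, hwt1]))
      hwt1 htρ hP1 hNsq hTθ hsmall
  refine ⟨fun h0 => ?_, hfin⟩
  rw [h0] at hD
  simp at hD
end

section
/- Let γ ∈ (0,1) and ρ > 0 with ρ² ≤ γ/4, set η = γ/(8ρ), and define f(x) = ((1−γ)x + ρ)/(1 − ρ(1−γ)x). Then for all real x, y with 0 ≤ x ≤ y ≤ η, one has 0 ≤ f(y) − f(x) ≤ (1 − γ/2)(y − x). -/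
/-- Proposition 1 of the truncated power method analysis: the Möbius-type map
`f(x) = ((1−γ)x + ρ)/(1 − ρ(1−γ)x)` is monotone nondecreasing and
`(1 − γ/2)`-Lipschitz on `[0, η]` with `η = γ/(8ρ)`, provided `ρ² ≤ γ/4`. -/
theorem moebius_map_monotone_lipschitz (γ ρ : ℝ)
    (hγ : γ ∈ Set.Ioo (0 : ℝ) 1) (hρ : 0 < ρ) (hρ2 : ρ ^ 2 ≤ γ / 4)
    (η : ℝ) (hη : η = γ / (8 * ρ))
    (f : ℝ → ℝ) (hf : ∀ x, f x = ((1 - γ) * x + ρ) / (1 - ρ * (1 - γ) * x))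
    (x y : ℝ) (hx : 0 ≤ x) (hxy : x ≤ y) (hy : y ≤ η) :
    0 ≤ f y - f x ∧ f y - f x ≤ (1 - γ / 2) * (y - x) := by
  obtain ⟨hγ0, hγ1⟩ := hγ
  have hyη : y * ρ ≤ γ / 8 := by
    have : y ≤ γ / (8 * ρ) := hη ▸ hy
    calc y * ρ ≤ (γ / (8 * ρ)) * ρ := by nlinarith
    _ = γ / 8 := by field_simp
  have hxη : x * ρ ≤ γ / 8 := le_trans (by nlinarith) hyη
  have hy0 : 0 ≤ y := le_trans hx hxy
  have hdx : 1 - γ / 8 ≤ 1 - ρ * (1 - γ) * x := by nlinarith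
  have hdy : 1 - γ / 8 ≤ 1 - ρ * (1 - γ) * y := by nlinarith
  have hdx0 : (0:ℝ) < 1 - ρ * (1 - γ) * x := by nlinarith
  have hdy0 : (0:ℝ) < 1 - ρ * (1 - γ) * y := by nlinarith
  have key : f y - f x =
      (1 - γ) * (1 + ρ ^ 2) * (y - x) /
        ((1 - ρ * (1 - γ) * x) * (1 - ρ * (1 - γ) * y)) := by
    rw [hf, hf]
    rw [div_sub_div _ _ hdy0.ne' hdx0.ne']
    ring
  have h1 : (1 - γ) * (1 + ρ ^ 2) ≤ (1 - γ / 2) * ((1 - γ / 8) * (1 - γ / 8)) := by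
    nlinarith [mul_nonneg (sq_nonneg γ) (sub_nonneg.2 hγ1.le),
      mul_nonneg (sub_nonneg.2 hγ1.le) (by linarith : (0:ℝ) ≤ γ / 4 - ρ ^ 2)]
  have h2 : (1 - γ / 2) * ((1 - γ / 8) * (1 - γ / 8)) ≤
      (1 - γ / 2) * ((1 - ρ * (1 - γ) * x) * (1 - ρ * (1 - γ) * y)) := by
    apply mul_le_mul_of_nonneg_left (mul_le_mul hdx hdy (by linarith) (by linarith)) (by linarith)
  constructor
  · rw [key]
    apply div_nonneg
    · exact mul_nonneg (mul_nonneg (by linarith) (by positivity)) (sub_nonneg.2 hxy)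
    · positivity
  · rw [key, div_le_iff₀ (by positivity)]
    nlinarith [mul_le_mul_of_nonneg_right (h1.trans h2) (sub_nonneg.2 hxy)]
end

section
/- Let γ ∈ (0,1) and ρ > 0 with ρ² ≤ γ/4, set η = γ/(8ρ) and f(x) = ((1−γ)x + ρ)/(1 − ρ(1−γ)x). Let ξ⋆ ∈ [0, η] satisfy f(ξ⋆) = ξ⋆, and let (ξ_t)_{t≥0} be defined by ξ_0 ∈ [0, η] and ξ_t = f(ξ_{t−1}) for t ≥ 1. Then for every t ≥ 0 one has ξ_t ∈ [0, η] and |ξ_t − ξ⋆| ≤ (1 − γ/2)^t · |ξ_0 − ξ⋆|. -/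
set_option maxHeartbeats 1000000


/-- Proposition 2 of the truncated power method analysis: the iteration
`ξ_t = f(ξ_{t−1})` stays in `[0, η]` and converges geometrically (with ratio
`1 − γ/2`) to the fixed point `ξ⋆`. -/
theorem moebius_iteration_geometric_convergence (γ ρ : ℝ)
    (hγ : γ ∈ Set.Ioo (0 : ℝ) 1) (hρ : 0 < ρ) (hρ2 : ρ ^ 2 ≤ γ / 4)
    (η : ℝ) (hη : η = γ / (8 * ρ))
    (f : ℝ → ℝ) (hf : ∀ x, f x = ((1 - γ) * x + ρ) / (1 - ρ * (1 - γ) * x))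
    (ξs : ℝ) (hξsmem : ξs ∈ Set.Icc 0 η) (hfix : f ξs = ξs)
    (ξ : ℕ → ℝ) (hξ0 : ξ 0 ∈ Set.Icc 0 η)
    (hrec : ∀ t : ℕ, ξ (t + 1) = f (ξ t)) :
    ∀ t : ℕ, ξ t ∈ Set.Icc 0 η ∧ |ξ t - ξs| ≤ (1 - γ / 2) ^ t * |ξ 0 - ξs| := by
  obtain ⟨hγ0, hγ1⟩ := hγ
  obtain ⟨hs0, hsη⟩ := hξsmem
  have hη0 : 0 < η := by rw [hη]; positivity
  have hρη' : ρ * η = γ / 8 := by rw [hη]; field_simp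
  have hρη2 : ρ ^ 2 * η ^ 2 = γ ^ 2 / 64 := by nlinarith [hρη']
  -- denominator lower bound on [0, η]
  have hD : ∀ x : ℝ, 0 ≤ x → x ≤ η → 1 - γ * (1 - γ) / 8 ≤ 1 - ρ * (1 - γ) * x := by
    intro x hx0 hxη
    nlinarith [mul_le_mul_of_nonneg_left hxη (le_of_lt hρ)]
  have hDposc : (31:ℝ)/32 ≤ 1 - γ * (1 - γ) / 8 := by nlinarith [sq_nonneg (γ - 1/2)]
  have hDs : (0:ℝ) < 1 - ρ * (1 - γ) * ξs := by
    have := hD ξs hs0 hsη; linarith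
  -- fixed point equation
  have hE : ρ * (1 - γ) * ξs ^ 2 + ρ = γ * ξs := by
    have h := hfix
    rw [hf ξs] at h
    rw [div_eq_iff (ne_of_gt hDs)] at h
    nlinarith [h]
  have h8 : 8 * ρ * ξs ≤ γ := by nlinarith [mul_le_mul_of_nonneg_left hsη (le_of_lt hρ)]
  -- (7+γ) ξs² ≤ 1
  have hts : (7 + γ) * ξs ^ 2 ≤ 1 := by
    nlinarith [mul_le_mul_of_nonneg_right h8 (mul_nonneg hs0 hs0),
      mul_nonneg (mul_nonneg (le_of_lt hρ) hs0) (sq_nonneg ξs)]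
  -- key: 64 ρ² ≤ γ² (7+γ)
  have hkey : 64 * ρ ^ 2 ≤ γ ^ 2 * (7 + γ) := by
    have hA : (0:ℝ) < 1 + (1 - γ) * ξs ^ 2 := by nlinarith [sq_nonneg ξs]
    have h1 : ρ * (1 + (1 - γ) * ξs ^ 2) = γ * ξs := by nlinarith [hE]
    have ht : 0 ≤ (7 + γ) * (1 + (1 - γ) * ξs ^ 2) ^ 2 - 64 * ξs ^ 2 := by
      nlinarith [hts, sq_nonneg ξs, sq_nonneg (1 - (7 + γ) * ξs ^ 2),
        mul_nonneg (sq_nonneg ξs) (sq_nonneg ξs)]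
    have h3 : 64 * ρ ^ 2 * (1 + (1 - γ) * ξs ^ 2) ^ 2 ≤
        γ ^ 2 * (7 + γ) * (1 + (1 - γ) * ξs ^ 2) ^ 2 := by
      have h4 : 0 ≤ γ ^ 2 * ((7 + γ) * (1 + (1 - γ) * ξs ^ 2) ^ 2 - 64 * ξs ^ 2) :=
        mul_nonneg (sq_nonneg γ) ht
      calc 64 * ρ ^ 2 * (1 + (1 - γ) * ξs ^ 2) ^ 2
          = 64 * (ρ * (1 + (1 - γ) * ξs ^ 2)) ^ 2 := by ring
        _ = 64 * (γ * ξs) ^ 2 := by rw [h1]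
        _ ≤ γ ^ 2 * (7 + γ) * (1 + (1 - γ) * ξs ^ 2) ^ 2 := by nlinarith [h4]
    exact le_of_mul_le_mul_right h3 (by positivity)
  -- invariance of [0, η]
  have hinv : ∀ x : ℝ, 0 ≤ x → x ≤ η → 0 ≤ f x ∧ f x ≤ η := by
    intro x hx0 hxη
    have hDx : (0:ℝ) < 1 - ρ * (1 - γ) * x := lt_of_lt_of_le (by linarith) (hD x hx0 hxη)
    constructor
    · rw [hf x]
      apply div_nonneg _ hDx.le
      nlinarith
    · rw [hf x, div_le_iff₀ hDx]
      have hslope : 0 ≤ (1 - γ) * (1 + ρ * η) := by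
        have h1 : (0:ℝ) ≤ 1 + ρ * η := by nlinarith
        exact mul_nonneg (by linarith) h1
      have hatη : (1 - γ) * η + ρ ≤ η * (1 - ρ * (1 - γ) * η) := by
        have hmul : 8 * ρ * ((1 - γ) * η + ρ) ≤ 8 * ρ * (η * (1 - ρ * (1 - γ) * η)) := by
          nlinarith [hkey, hρη', hρη2]
        exact le_of_mul_le_mul_left hmul (by positivity)
      nlinarith [mul_le_mul_of_nonneg_left hxη hslope]
  -- contraction
  have hcon : ∀ x : ℝ, 0 ≤ x → x ≤ η → |f x - ξs| ≤ (1 - γ / 2) * |x - ξs| := by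
    intro x hx0 hxη
    have hDx : (31:ℝ)/32 ≤ 1 - ρ * (1 - γ) * x := le_trans hDposc (hD x hx0 hxη)
    have hDs' : (31:ℝ)/32 ≤ 1 - ρ * (1 - γ) * ξs := le_trans hDposc (hD ξs hs0 hsη)
    have hDxpos : (0:ℝ) < 1 - ρ * (1 - γ) * x := by linarith
    have heq : f x - ξs = (1 - γ) * (1 + ρ ^ 2) * (x - ξs) /
        ((1 - ρ * (1 - γ) * x) * (1 - ρ * (1 - γ) * ξs)) := by
      conv_lhs => rw [hf x, ← hfix, hf ξs]
      rw [div_sub_div _ _ hDxpos.ne' hDs.ne']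
      ring
    rw [heq, abs_div, abs_mul]
    have habs1 : |(1 - γ) * (1 + ρ ^ 2)| = (1 - γ) * (1 + ρ ^ 2) := by
      apply abs_of_nonneg
      have : (0:ℝ) ≤ 1 - γ := by linarith
      positivity
    have habs2 : |(1 - ρ * (1 - γ) * x) * (1 - ρ * (1 - γ) * ξs)| =
        (1 - ρ * (1 - γ) * x) * (1 - ρ * (1 - γ) * ξs) := by
      apply abs_of_nonneg
      nlinarith
    rw [habs1, habs2, div_le_iff₀ (by nlinarith)]
    have hnum : (1 - γ) * (1 + ρ ^ 2) ≤
        (1 - γ / 2) * ((1 - ρ * (1 - γ) * x) * (1 - ρ * (1 - γ) * ξs)) := by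
      have h1 : (1 - γ) * (1 + ρ ^ 2) ≤ (1 - γ) * (1 + γ / 4) := by nlinarith
      have h2 : (1 - γ) * (1 + γ / 4) ≤
          (1 - γ / 2) * ((1 - γ * (1 - γ) / 8) * (1 - γ * (1 - γ) / 8)) := by
        nlinarith [mul_nonneg (sq_nonneg γ) (by linarith : (0:ℝ) ≤ 1 - γ),
          mul_nonneg (mul_nonneg (sq_nonneg γ) (sq_nonneg γ)) (by linarith : (0:ℝ) ≤ 1 - γ),
          sq_nonneg γ, mul_nonneg (sq_nonneg γ) hγ0.le]
      have h3 : (1 - γ / 2) * ((1 - γ * (1 - γ) / 8) * (1 - γ * (1 - γ) / 8)) ≤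
          (1 - γ / 2) * ((1 - ρ * (1 - γ) * x) * (1 - ρ * (1 - γ) * ξs)) := by
        apply mul_le_mul_of_nonneg_left _ (by linarith)
        have hDxd := hD x hx0 hxη
        have hDsd := hD ξs hs0 hsη
        nlinarith [hDposc]
      linarith
    calc (1 - γ) * (1 + ρ ^ 2) * |x - ξs|
        ≤ (1 - γ / 2) * ((1 - ρ * (1 - γ) * x) * (1 - ρ * (1 - γ) * ξs)) * |x - ξs| := by
          apply mul_le_mul_of_nonneg_right hnum (abs_nonneg _)
      _ = (1 - γ / 2) * |x - ξs| * ((1 - ρ * (1 - γ) * x) * (1 - ρ * (1 - γ) * ξs)) := by ring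
  -- induction
  intro t
  induction t with
  | zero => exact ⟨hξ0, by simp⟩
  | succ n ih =>
    obtain ⟨⟨hn0, hnη⟩, hnb⟩ := ih
    have hmem := hinv (ξ n) hn0 hnη
    rw [hrec n]
    refine ⟨⟨hmem.1, hmem.2⟩, ?_⟩
    calc |f (ξ n) - ξs| ≤ (1 - γ / 2) * |ξ n - ξs| := hcon (ξ n) hn0 hnη
      _ ≤ (1 - γ / 2) * ((1 - γ / 2) ^ n * |ξ 0 - ξs|) := by
          apply mul_le_mul_of_nonneg_left hnb (by linarith)
      _ = (1 - γ / 2) ^ (n + 1) * |ξ 0 - ξs| := by ring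
end

section
/- Let γ ∈ (0,1), δ ∈ (0,1], and ρ > 0 with ρ² ≤ γ²δ/64. Define f(x) = ((1−γ)x + ρ)/(1 − ρ(1−γ)x), let ξ⋆ = (γ − √(γ² − 4(1−γ)ρ²))/(2ρ(1−γ)) (the discriminant condition 4(1−γ)ρ² ≤ γ² holds under the stated hypotheses), and define (ξ_t)_{t≥0} by ξ_0 = √(1−δ)/√δ and ξ_t = f(ξ_{t−1}) for t ≥ 1. Then for every t ≥ 0, |ξ_t − ξ⋆| ≤ e^{−tγ/2} · δ^{−1/2}. -/
/-!
The fixed point `ξ⋆` is the smaller root of `ρ(1-γ)ξ² - γξ + ρ = 0`, so `ξ⋆ = 2ρ / (γ + √D) ≤ 2ρ/γ`.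
Writing `M = δ^{-1/2}`, the hypothesis gives `4ρM ≤ γ`. Then `f` maps `[0, M]` into itself, and since
`ξ⋆` is a fixed point, `f x - ξ⋆ = (1-γ)(1+ρξ⋆)(x-ξ⋆) / (1-ρ(1-γ)x)`; on `[0, M]` both `ρξ⋆` and
`ρ(1-γ)x` are at most `γ/4`, which makes the factor at most `1 - γ/2 ≤ e^{-γ/2}`. Both `ξ_0` and `ξ⋆`
lie in `[0, M]`, so the initial error is at most `M`.
-/

open Set

noncomputable def moebius (γ ρ x : ℝ) : ℝ := ((1 - γ) * x + ρ) / (1 - ρ * (1 - γ) * x)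

section QuadraticRoot

variable {a b c ξ : ℝ}

theorem quadratic_eq_zero_of_eq_smallerRoot (ha : a ≠ 0) (hD : 0 ≤ b ^ 2 - 4 * a * c)
    (hξ : ξ = (b - √(b ^ 2 - 4 * a * c)) / (2 * a)) : a * ξ ^ 2 - b * ξ + c = 0 := by
  have hs := Real.sq_sqrt hD
  have h2a : ξ * (2 * a) = b - √(b ^ 2 - 4 * a * c) := by
    rw [hξ]; exact div_mul_cancel₀ _ (mul_ne_zero two_ne_zero ha)
  have h : 4 * a * (a * ξ ^ 2 - b * ξ + c) = 0 := by
    linear_combination (ξ * (2 * a) - b - √(b ^ 2 - 4 * a * c)) * h2a + hs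
  simpa [ha] using h

theorem smallerRoot_mem_Icc (ha : 0 < a) (hb : 0 < b) (hc : 0 ≤ c) (hD : 0 ≤ b ^ 2 - 4 * a * c)
    (hξ : ξ = (b - √(b ^ 2 - 4 * a * c)) / (2 * a)) : ξ ∈ Icc 0 (2 * c / b) := by
  set s := √(b ^ 2 - 4 * a * c)
  have hs0 : 0 ≤ s := Real.sqrt_nonneg _
  have hsb : s ≤ b := Real.sqrt_le_iff.mpr ⟨hb.le, by nlinarith [mul_nonneg ha.le hc]⟩
  have hξ0 : 0 ≤ ξ := hξ ▸ div_nonneg (sub_nonneg.mpr hsb) (by positivity)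
  -- rationalising: `(b - s)(b + s) = 4ac`
  have hprod : ξ * (b + s) = 2 * c := by
    rw [hξ, div_mul_eq_mul_div, div_eq_iff (by positivity)]
    linear_combination -Real.sq_sqrt hD
  refine ⟨hξ0, (le_div_iff₀ hb).mpr ?_⟩
  nlinarith [mul_nonneg hξ0 hs0]

end QuadraticRoot

section Moebius

variable {γ ρ ξ x : ℝ}

theorem moebius_sub_of_isFixedPoint (hq : ρ * (1 - γ) * ξ ^ 2 - γ * ξ + ρ = 0)
    (hx : 1 - ρ * (1 - γ) * x ≠ 0) :
    moebius γ ρ x - ξ = (1 - γ) * (1 + ρ * ξ) * (x - ξ) / (1 - ρ * (1 - γ) * x) := by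
  rw [moebius, eq_div_iff hx, sub_mul, div_mul_cancel₀ _ hx]
  linear_combination hq

theorem contraction_factor_le (hγ0 : 0 ≤ γ) {p q : ℝ} (hp0 : 0 ≤ p) (hp : p ≤ γ / 4)
    (hq0 : 0 ≤ q) (hq : q ≤ γ / 4) : (1 - γ) * (1 + p) ≤ (1 - γ / 2) * (1 - q) := by
  nlinarith [mul_nonneg hγ0 hp0, mul_nonneg hγ0 hq0]

theorem abs_moebius_sub_le (hγ0 : 0 ≤ γ) (hγ1 : γ ≤ 1) (hρ : 0 ≤ ρ)
    (hq : ρ * (1 - γ) * ξ ^ 2 - γ * ξ + ρ = 0) (hξ0 : 0 ≤ ξ) (hρξ : ρ * ξ ≤ γ / 4)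
    (hx0 : 0 ≤ x) (hρx : ρ * x ≤ γ / 4) :
    |moebius γ ρ x - ξ| ≤ (1 - γ / 2) * |x - ξ| := by
  have hqx0 : 0 ≤ ρ * (1 - γ) * x := by
    have := sub_nonneg.mpr hγ1; positivity
  have hqx : ρ * (1 - γ) * x ≤ γ / 4 := by nlinarith [mul_nonneg hρ hx0]
  have hden : 0 < 1 - ρ * (1 - γ) * x := by linarith
  have hfactor : 0 ≤ (1 - γ) * (1 + ρ * ξ) := by
    have := sub_nonneg.mpr hγ1; positivity
  rw [moebius_sub_of_isFixedPoint hq hden.ne', abs_div, abs_mul, abs_of_nonneg hfactor,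
    abs_of_pos hden, div_le_iff₀ hden]
  nlinarith [mul_le_mul_of_nonneg_left
    (contraction_factor_le hγ0 (mul_nonneg hρ hξ0) hρξ hqx0 hqx) (abs_nonneg (x - ξ))]

theorem moebius_mapsTo_Icc (hγ0 : 0 ≤ γ) (hγ1 : γ ≤ 1) (hρ : 0 ≤ ρ) {M : ℝ} (hM : 1 ≤ M)
    (hρM : 2 * ρ * M ≤ γ) : MapsTo (moebius γ ρ) (Icc 0 M) (Icc 0 M) := by
  rintro x ⟨hx0, hxM⟩
  have h1γ := sub_nonneg.mpr hγ1
  have hqx : ρ * (1 - γ) * x ≤ ρ * M := by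
    have := mul_le_mul (sub_le_self 1 hγ0) hxM hx0 zero_le_one
    nlinarith [mul_le_mul_of_nonneg_left this hρ]
  have hden : 0 < 1 - ρ * (1 - γ) * x := by nlinarith
  refine ⟨div_nonneg (by positivity) hden.le, (div_le_iff₀ hden).mpr ?_⟩
  nlinarith [mul_le_mul_of_nonneg_left hqx (by linarith : (0 : ℝ) ≤ M),
    mul_le_mul_of_nonneg_left hxM h1γ]

theorem moebius_fixedPoint_spec (hγ0 : 0 < γ) (hγ1 : γ < 1) (hρ : 0 < ρ) (hρ4 : 4 * ρ ≤ γ)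
    (hξ : ξ = (γ - √(γ ^ 2 - 4 * (1 - γ) * ρ ^ 2)) / (2 * ρ * (1 - γ))) :
    ρ * (1 - γ) * ξ ^ 2 - γ * ξ + ρ = 0 ∧ ξ ∈ Icc 0 (2 * ρ / γ) := by
  replace hξ : ξ = (γ - √(γ ^ 2 - 4 * (ρ * (1 - γ)) * ρ)) / (2 * (ρ * (1 - γ))) := by
    rw [hξ]; ring_nf
  have ha : 0 < ρ * (1 - γ) := mul_pos hρ (sub_pos.mpr hγ1)
  have hD : 0 ≤ γ ^ 2 - 4 * (ρ * (1 - γ)) * ρ := by nlinarith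
  exact ⟨quadratic_eq_zero_of_eq_smallerRoot ha.ne' hD hξ, smallerRoot_mem_Icc ha hγ0 hρ.le hD hξ⟩

end Moebius

theorem abs_sub_le_pow_mul_of_contracting {S : Set ℝ} {g : ℝ → ℝ} {p k : ℝ} {u : ℕ → ℝ}
    (hS : MapsTo g S S) (hk : 0 ≤ k) (hg : ∀ x ∈ S, |g x - p| ≤ k * |x - p|) (hu0 : u 0 ∈ S)
    (hu : ∀ t, u (t + 1) = g (u t)) (t : ℕ) : u t ∈ S ∧ |u t - p| ≤ k ^ t * |u 0 - p| := by
  induction t with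
  | zero => simpa using hu0
  | succ t ih =>
    refine ⟨hu t ▸ hS ih.1, ?_⟩
    calc |u (t + 1) - p| ≤ k * |u t - p| := hu t ▸ hg _ ih.1
      _ ≤ k * (k ^ t * |u 0 - p|) := mul_le_mul_of_nonneg_left ih.2 hk
      _ = k ^ (t + 1) * |u 0 - p| := by ring

theorem four_mul_mul_inv_sqrt_le {γ δ ρ : ℝ} (hγ : 0 ≤ γ) (hδ : 0 < δ) (hρ : 0 ≤ ρ)
    (hρ2 : ρ ^ 2 ≤ γ ^ 2 * δ / 64) : 4 * ρ * (√δ)⁻¹ ≤ γ := by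
  have hρw : 8 * ρ ≤ γ * √δ := (pow_le_pow_iff_left₀ (by positivity) (by positivity)
    two_ne_zero).mp (by rw [mul_pow, mul_pow, Real.sq_sqrt hδ.le]; linarith)
  rw [mul_inv_le_iff₀ (Real.sqrt_pos.mpr hδ)]
  nlinarith [Real.sqrt_nonneg δ]

theorem one_sub_half_pow_le_exp (γ : ℝ) (hγ : γ ≤ 2) (t : ℕ) :
    (1 - γ / 2) ^ t ≤ Real.exp (-(t : ℝ) * γ / 2) := by
  calc (1 - γ / 2) ^ t ≤ Real.exp (-(γ / 2)) ^ t :=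
        pow_le_pow_left₀ (by linarith) (by linarith [Real.add_one_le_exp (-(γ / 2))]) t
    _ = Real.exp (-(t : ℝ) * γ / 2) := by rw [← Real.exp_nat_mul]; ring_nf

/-- Claim (11) in the proof of the truncated power method theorem: the iterates
of the Möbius-type map converge exponentially fast to the fixed point `ξ⋆`,
with `|ξ_t − ξ⋆| ≤ e^{−tγ/2} δ^{−1/2}`. -/
theorem moebius_iteration_exponential_convergence (γ δ ρ : ℝ)
    (hγ : γ ∈ Set.Ioo (0 : ℝ) 1) (hδ0 : 0 < δ) (hδ1 : δ ≤ 1) (hρ : 0 < ρ)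
    (hρ2 : ρ ^ 2 ≤ γ ^ 2 * δ / 64)
    (f : ℝ → ℝ) (hf : ∀ x, f x = ((1 - γ) * x + ρ) / (1 - ρ * (1 - γ) * x))
    (ξs : ℝ)
    (hξs : ξs = (γ - Real.sqrt (γ ^ 2 - 4 * (1 - γ) * ρ ^ 2)) / (2 * ρ * (1 - γ)))
    (ξ : ℕ → ℝ) (hξ0 : ξ 0 = Real.sqrt (1 - δ) / Real.sqrt δ)
    (hrec : ∀ t : ℕ, ξ (t + 1) = f (ξ t)) :
    ∀ t : ℕ, |ξ t - ξs| ≤ Real.exp (-(t : ℝ) * γ / 2) * (Real.sqrt δ)⁻¹ := by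
  obtain ⟨hγ0, hγ1⟩ := hγ
  set M := (√δ)⁻¹
  have hM : 1 ≤ M := one_le_inv₀ (Real.sqrt_pos.mpr hδ0) |>.mpr (Real.sqrt_le_one.mpr hδ1)
  have hρM : 4 * ρ * M ≤ γ := four_mul_mul_inv_sqrt_le hγ0.le hδ0 hρ.le hρ2
  obtain ⟨hq, hξs0, hξs2⟩ := moebius_fixedPoint_spec hγ0 hγ1 hρ (by nlinarith) hξs
  rw [le_div_iff₀ hγ0] at hξs2
  have hξsM : ξs ∈ Icc 0 M := ⟨hξs0, by nlinarith⟩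
  have hξ0M : ξ 0 ∈ Icc 0 M := by
    rw [hξ0, div_eq_mul_inv]
    exact ⟨by positivity, mul_le_of_le_one_left (by positivity) (Real.sqrt_le_one.mpr (by linarith))⟩
  intro t
  have hcontr := abs_sub_le_pow_mul_of_contracting
    (moebius_mapsTo_Icc hγ0.le hγ1.le hρ.le hM (by linarith)) (by linarith)
    (fun x hx => abs_moebius_sub_le hγ0.le hγ1.le hρ.le hq hξs0 (by nlinarith) hx.1
      (by nlinarith [hx.2]))
    hξ0M (fun t => (hrec t).trans (hf _)) t
  calc |ξ t - ξs| ≤ (1 - γ / 2) ^ t * |ξ 0 - ξs| := hcontr.2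
    _ ≤ Real.exp (-(t : ℝ) * γ / 2) * M :=
      mul_le_mul (one_sub_half_pow_le_exp γ (by linarith) t)
        (abs_sub_le_iff.mpr ⟨by linarith [hξ0M.2], by linarith [hξsM.2, hξ0M.1]⟩)
        (abs_nonneg _) (Real.exp_pos _).le
end

section
/- Let A be an N×N Hermitian positive-semidefinite complex matrix, λ1 > 0, ψ a unit vector with A ψ = λ1 ψ supported on a set of size χ ≥ 1, and assume Re⟨u, A u⟩ ≤ λ1‖u‖² for every u. Let γ ∈ (0,1], let ε > 0, and let k be an integer with k ≥ 9 λ1 χ/(γ² ε). Then for every unit vector v with ⟨ψ, v⟩ ≠ 0 and T(v) ≤ 3√(χ/k)/γ, one has λ1 − ε ≤ Re⟨v, A v⟩ ≤ λ1. -/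
open Matrix Finset

/-- Tangent of the angle between `v` and a fixed unit vector `ψ`:
`T(v) = ‖v − ⟨ψ, v⟩ψ‖ / |⟨ψ, v⟩|`. -/
noncomputable def tang {N : ℕ} (ψ v : Fin N → ℂ) : ℝ :=
  cnorm (v - cinner ψ v • ψ) / ‖cinner ψ v‖

lemma cinner_add_right' {ι : Type*} [Fintype ι] (u v w : ι → ℂ) :
    cinner u (v + w) = cinner u v + cinner u w := by
  simp [cinner, mul_add, Finset.sum_add_distrib]

lemma cinner_add_left' {ι : Type*} [Fintype ι] (u v w : ι → ℂ) :
    cinner (u + v) w = cinner u w + cinner v w := by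
  simp [cinner, add_mul, Finset.sum_add_distrib]

lemma cinner_sub_right' {ι : Type*} [Fintype ι] (u v w : ι → ℂ) :
    cinner u (v - w) = cinner u v - cinner u w := by
  simp [cinner, mul_sub, Finset.sum_sub_distrib]

lemma cinner_smul_right' {ι : Type*} [Fintype ι] (c : ℂ) (u v : ι → ℂ) :
    cinner u (c • v) = c * cinner u v := by
  rw [cinner, cinner, Finset.mul_sum]
  exact Finset.sum_congr rfl fun i _ => by simp; ring

lemma cinner_smul_left' {ι : Type*} [Fintype ι] (c : ℂ) (u v : ι → ℂ) :
    cinner (c • u) v = (starRingEnd ℂ) c * cinner u v := by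
  rw [cinner, cinner, Finset.mul_sum]
  exact Finset.sum_congr rfl fun i _ => by simp; ring

lemma cinner_conj_symm' {ι : Type*} [Fintype ι] (u v : ι → ℂ) :
    cinner u v = (starRingEnd ℂ) (cinner v u) := by
  rw [cinner, cinner, map_sum]
  exact Finset.sum_congr rfl fun i _ => by simp [mul_comm]

lemma cinner_self' {ι : Type*} [Fintype ι] (u : ι → ℂ) :
    cinner u u = ((∑ i, Complex.normSq (u i) : ℝ) : ℂ) := by
  simp [cinner, Complex.normSq_eq_conj_mul_self]

lemma cinner_mulVec_comm' {N : ℕ} (A : Matrix (Fin N) (Fin N) ℂ)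
    (h : A.IsHermitian) (u w : Fin N → ℂ) :
    cinner u (A.mulVec w) = cinner (A.mulVec u) w := by
  simp only [cinner, Matrix.mulVec, dotProduct, Finset.mul_sum,
    Finset.sum_mul, map_sum, _root_.map_mul]
  rw [Finset.sum_comm]
  refine Finset.sum_congr rfl fun i _ => Finset.sum_congr rfl fun j _ => ?_
  have h2 : (starRingEnd ℂ) (A i j) = A j i := h.apply j i
  rw [h2]; ring

set_option maxHeartbeats 1000000 in
/-- The final step of the proof of Theorem 1 of the paper: once the tangent of
the iterate is below `3√(χ/k)/γ`, the Rayleigh quotient approximates the top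
eigenvalue `λ1` within additive error `ε` provided `k ≥ 9λ1χγ⁻²ε⁻¹`. -/
theorem small_tangent_rayleigh_quotient {N : ℕ} (A : Matrix (Fin N) (Fin N) ℂ)
    (hHerm : A.IsHermitian)
    (hPSD : ∀ u : Fin N → ℂ, 0 ≤ (cinner u (A.mulVec u)).re)
    (lam1 : ℝ) (hlam1 : 0 < lam1)
    (ψ : Fin N → ℂ) (hψ : cnorm ψ = 1)
    (hEig : A.mulVec ψ = (lam1 : ℂ) • ψ)
    (M : Finset (Fin N)) (χ : ℕ) (hM : M.card = χ) (hχ : 1 ≤ χ)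
    (hsupp : ∀ x ∉ M, ψ x = 0)
    (hUp : ∀ u : Fin N → ℂ, (cinner u (A.mulVec u)).re ≤ lam1 * cnorm u ^ 2)
    (γ : ℝ) (hγ0 : 0 < γ) (hγ1 : γ ≤ 1)
    (ε : ℝ) (hε : 0 < ε)
    (k : ℕ) (hk : 9 * lam1 * (χ : ℝ) / (γ ^ 2 * ε) ≤ (k : ℝ))
    (v : Fin N → ℂ) (hv : cnorm v = 1) (hov : cinner ψ v ≠ 0)
    (hT : tang ψ v ≤ 3 * Real.sqrt ((χ : ℝ) / (k : ℝ)) / γ) :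
    lam1 - ε ≤ (cinner v (A.mulVec v)).re ∧ (cinner v (A.mulVec v)).re ≤ lam1 := by
  -- upper bound
  have hub : (cinner v (A.mulVec v)).re ≤ lam1 := by
    have := hUp v
    rw [hv] at this; nlinarith [this]
  refine ⟨?_, hub⟩
  set c : ℂ := cinner ψ v with hc
  set w : Fin N → ℂ := v - c • ψ with hw
  have hvdec : v = c • ψ + w := by simp [hw]
  have hψS : (∑ i, Complex.normSq (ψ i)) = 1 := by
    have := hψ; rw [cnorm] at this
    exact Real.sqrt_eq_one.mp this
  have hψψ : cinner ψ ψ = 1 := by rw [cinner_self', hψS]; norm_num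
  have horth : cinner ψ w = 0 := by
    rw [hw, cinner_sub_right', cinner_smul_right', hψψ, ← hc]; ring
  have horth' : cinner w ψ = 0 := by
    rw [cinner_conj_symm', horth]; simp
  have hAψ : cinner ψ (A.mulVec ψ) = (lam1 : ℂ) := by
    rw [hEig, cinner_smul_right', hψψ]; ring
  have hψAw : cinner ψ (A.mulVec w) = 0 := by
    rw [cinner_mulVec_comm' A hHerm, hEig, cinner_smul_left', horth]; ring
  have hwAψ : cinner w (A.mulVec ψ) = 0 := by
    rw [hEig, cinner_smul_right', horth']; ring
  -- expansion of the quadratic form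
  have hexp : cinner v (A.mulVec v)
      = ((Complex.normSq c : ℝ) : ℂ) * (lam1 : ℂ) + cinner w (A.mulVec w) := by
    conv_lhs => rw [hvdec]
    rw [Matrix.mulVec_add, Matrix.mulVec_smul]
    simp only [cinner_add_left', cinner_add_right', cinner_smul_left',
      cinner_smul_right', hAψ, hψAw, hwAψ, mul_zero, Complex.normSq_eq_conj_mul_self]
    ring
  -- norm expansion
  have hvS : (∑ i, Complex.normSq (v i)) = 1 := by
    have := hv; rw [cnorm] at this
    exact Real.sqrt_eq_one.mp this
  have hwS0 : (0:ℝ) ≤ ∑ i, Complex.normSq (w i) :=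
    Finset.sum_nonneg fun i _ => Complex.normSq_nonneg _
  have hnorm : Complex.normSq c + (∑ i, Complex.normSq (w i)) = 1 := by
    have hvv : cinner v v = ((Complex.normSq c : ℝ) : ℂ) + cinner w w := by
      conv_lhs => rw [hvdec]
      simp only [cinner_add_left', cinner_add_right', cinner_smul_left',
        cinner_smul_right', hψψ, horth, horth', mul_zero, mul_one,
        Complex.normSq_eq_conj_mul_self]
      ring
    rw [cinner_self', cinner_self'] at hvv
    have := congrArg Complex.re hvv
    simp only [Complex.ofReal_re, Complex.add_re] at this
    rw [hvS] at this
    linarith [this]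
  set a2 : ℝ := Complex.normSq c with ha2
  have ha2pos : 0 < a2 := Complex.normSq_pos.mpr hov
  have hχpos : (0:ℝ) < (χ : ℝ) := by exact_mod_cast Nat.lt_of_lt_of_le Nat.zero_lt_one hχ
  have hkpos : (0:ℝ) < (k : ℝ) := by
    have h1 : (0:ℝ) < 9 * lam1 * (χ : ℝ) / (γ ^ 2 * ε) :=
      div_pos (mul_pos (mul_pos (by norm_num) hlam1) hχpos)
        (mul_pos (pow_pos hγ0 2) hε)
    linarith
  set t : ℝ := 3 * Real.sqrt ((χ : ℝ) / (k : ℝ)) / γ with ht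
  have ht2 : t ^ 2 = 9 * ((χ : ℝ) / (k : ℝ)) / γ ^ 2 := by
    rw [ht, div_pow, mul_pow, Real.sq_sqrt (by positivity)]
    norm_num
  have habs : ‖c‖ > 0 := norm_pos_iff.mpr hov
  have hT' : cnorm w / ‖c‖ ≤ t := by rw [tang] at hT; exact hT
  have hTw : cnorm w ≤ t * ‖c‖ := by
    rw [div_le_iff₀ habs] at hT'; exact hT'
  have hcnw : cnorm w ^ 2 = ∑ i, Complex.normSq (w i) := by
    rw [cnorm, Real.sq_sqrt hwS0]
  have habs2 : ‖c‖ ^ 2 = a2 := Complex.sq_norm c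
  have hwbound : (1 : ℝ) - a2 ≤ t ^ 2 * a2 := by
    have h1 : cnorm w ^ 2 ≤ (t * ‖c‖) ^ 2 := by
      have h0 : 0 ≤ cnorm w := Real.sqrt_nonneg _
      nlinarith
    rw [hcnw, mul_pow, habs2] at h1
    linarith [hnorm]
  have ha2le1 : a2 ≤ 1 := by linarith [hwS0, hnorm]
  have ht2ub : t ^ 2 * lam1 ≤ ε := by
    rw [ht2]
    rw [div_le_iff₀ (by positivity : (0:ℝ) < γ ^ 2 * ε)] at hk
    have heq : 9 * ((χ : ℝ) / (k : ℝ)) / γ ^ 2 * lam1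
        = 9 * lam1 * (χ : ℝ) / ((k : ℝ) * γ ^ 2) := by
      field_simp
    rw [heq, div_le_iff₀ (by positivity)]
    calc 9 * lam1 * (χ : ℝ) ≤ (k : ℝ) * (γ ^ 2 * ε) := hk
      _ = ε * ((k : ℝ) * γ ^ 2) := by ring
  have hre : (cinner v (A.mulVec v)).re = a2 * lam1 + (cinner w (A.mulVec w)).re := by
    rw [hexp, Complex.add_re, ← Complex.ofReal_mul, Complex.ofReal_re]
  have hpsdw := hPSD w
  have key : lam1 - ε ≤ a2 * lam1 := by
    have h1 : 1 - t ^ 2 ≤ a2 := by nlinarith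
    nlinarith
  linarith [hre, hpsdw, key]
end

section
/- Let H be an n×n Hermitian positive-semidefinite complex matrix and ψ₀ a vector with H.mulVec ψ₀ = 0. Let m₁ be a real number with |m₁| ≤ 1 and m₂ ≥ 0 a real number. Let X = !![0,1;1,0] and Z = !![1,0;0,−1] be the 2×2 Pauli matrices over ℂ, and define the 2n×2n matrix M = (1 + m₁ • X) ⊗ₖ H + m₂ • ((1 − Z) ⊗ₖ 1), where ⊗ₖ is the Kronecker product and 1 denotes the identity matrix of the appropriate size. Then M is positive semidefinite, and M.mulVec v = 0 where v is the vector v(i,j) = (if i = 0 then ψ₀(j) else 0) (i.e. v = e₀ ⊗ ψ₀). -/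
/-!
Both `1 + m₁X` and `1 - Z` have the form `1 + tP` with `P` a Hermitian involution and
`|t| ≤ 1`. Since `(1 ± P)² = 2(1 ± P)`, the matrices `1 ± P` are PSD, and `1 + tP` is the
nonnegative combination `((1 + t)/2)(1 + P) + ((1 - t)/2)(1 - P)`. Kronecker products, sums and
nonnegative multiples of PSD matrices are PSD, so `H_P` is PSD. On product vectors
`(A ⊗ B)(x ⊗ y) = Ax ⊗ By`, and both terms of `H_P` kill `e₀ ⊗ ψ₀` because `Hψ₀ = 0` and
`(1 - Z)e₀ = 0`.
-/

open Matrix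
open scoped Kronecker ComplexOrder

namespace Matrix

variable {ι κ : Type*} [Fintype ι] [Fintype κ]

lemma IsHermitian.posSemidef_iff_forall_re_cinner_mulVec_nonneg {A : Matrix ι ι ℂ}
    (hA : A.IsHermitian) :
    A.PosSemidef ↔ ∀ v, 0 ≤ (cinner v (A *ᵥ v)).re := by
  refine ⟨fun h v => (Complex.nonneg_iff.mp (h.dotProduct_mulVec_nonneg v)).1, fun h => ?_⟩
  refine PosSemidef.of_dotProduct_mulVec_nonneg hA fun v => Complex.nonneg_iff.mpr ⟨h v, ?_⟩
  exact (hA.im_star_dotProduct_mulVec_self v).symm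

lemma kronecker_mulVec_kronecker {R : Type*} [CommSemiring R] {ι' κ' : Type*}
    (A : Matrix ι' ι R) (B : Matrix κ' κ R) (x : ι → R) (y : κ → R) :
    (A ⊗ₖ B) *ᵥ (fun p => x p.1 * y p.2) = fun p => (A *ᵥ x) p.1 * (B *ᵥ y) p.2 := by
  ext ⟨i, k⟩
  simp only [mulVec, dotProduct, kroneckerMap_apply, Fintype.sum_prod_type, Finset.sum_mul_sum]
  exact Finset.sum_congr rfl fun _ _ => Finset.sum_congr rfl fun _ _ => by ring

section Pauli

variable {R : Type*} [Ring R]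

def pauliX : Matrix (Fin 2) (Fin 2) R := !![0, 1; 1, 0]

def pauliZ : Matrix (Fin 2) (Fin 2) R := !![1, 0; 0, -1]

lemma pauliX_mul_self : (pauliX * pauliX : Matrix (Fin 2) (Fin 2) R) = 1 := by
  simp [pauliX, one_fin_two]

lemma pauliZ_mul_self : (pauliZ * pauliZ : Matrix (Fin 2) (Fin 2) R) = 1 := by
  simp [pauliZ, one_fin_two]

lemma one_sub_pauliZ_mulVec_single_zero :
    (1 - pauliZ : Matrix (Fin 2) (Fin 2) R) *ᵥ Pi.single 0 1 = 0 := by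
  ext i; fin_cases i <;> simp [pauliZ, mulVec, dotProduct, Fin.sum_univ_two]

variable [StarRing R]

lemma isHermitian_pauliX : (pauliX : Matrix (Fin 2) (Fin 2) R).IsHermitian := by
  ext i j; fin_cases i <;> fin_cases j <;> simp [pauliX]

lemma isHermitian_pauliZ : (pauliZ : Matrix (Fin 2) (Fin 2) R).IsHermitian := by
  ext i j; fin_cases i <;> fin_cases j <;> simp [pauliZ]

end Pauli

variable {𝕜 : Type*} [RCLike 𝕜] [DecidableEq ι]

lemma IsHermitian.posSemidef_one_add_of_mul_self_eq_one {X : Matrix ι ι 𝕜}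
    (hX : X.IsHermitian) (hXX : X * X = 1) : (1 + X).PosSemidef := by
  have h : 1 + X = (2⁻¹ : 𝕜) • ((1 + X)ᴴ * (1 + X)) := by
    rw [conjTranspose_add, conjTranspose_one, hX.eq, add_mul, mul_add, mul_add, hXX, one_mul,
      one_mul, mul_one]
    module
  rw [h]
  exact (posSemidef_conjTranspose_mul_self _).smul (by positivity)

lemma IsHermitian.posSemidef_one_sub_of_mul_self_eq_one {X : Matrix ι ι 𝕜}
    (hX : X.IsHermitian) (hXX : X * X = 1) : (1 - X).PosSemidef := by
  rw [sub_eq_add_neg]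
  exact hX.neg.posSemidef_one_add_of_mul_self_eq_one (by rw [neg_mul_neg, hXX])

lemma IsHermitian.posSemidef_one_add_smul_of_mul_self_eq_one {X : Matrix ι ι 𝕜}
    (hX : X.IsHermitian) (hXX : X * X = 1) {t : ℝ} (ht : |t| ≤ 1) :
    (1 + (t : 𝕜) • X).PosSemidef := by
  obtain ⟨hlo, hhi⟩ := abs_le.mp ht
  have h : 1 + (t : 𝕜) • X =
      (((1 + t) / 2 : ℝ) : 𝕜) • (1 + X) + (((1 - t) / 2 : ℝ) : 𝕜) • (1 - X) := by
    push_cast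
    module
  rw [h]
  exact ((hX.posSemidef_one_add_of_mul_self_eq_one hXX).smul
      (RCLike.ofReal_nonneg.mpr (by linarith))).add
    ((hX.posSemidef_one_sub_of_mul_self_eq_one hXX).smul (RCLike.ofReal_nonneg.mpr (by linarith)))

end Matrix

/-- The warmup-example patch Hamiltonian of Section III B:
`M = (I + m₁X) ⊗ H + m₂(I − Z) ⊗ I` is positive semidefinite and has
`e₀ ⊗ ψ₀` in its kernel (hence as a ground state), whenever `H` is PSD
Hermitian with `Hψ₀ = 0`, `|m₁| ≤ 1`, and `m₂ ≥ 0`. -/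
theorem warmup_patch_hamiltonian_psd_kernel {n : ℕ}
    (H : Matrix (Fin n) (Fin n) ℂ) (hHerm : H.IsHermitian)
    (hPSD : ∀ v : Fin n → ℂ, 0 ≤ (cinner v (H.mulVec v)).re)
    (ψ₀ : Fin n → ℂ) (hker : H.mulVec ψ₀ = 0)
    (m₁ m₂ : ℝ) (hm₁ : |m₁| ≤ 1) (hm₂ : 0 ≤ m₂)
    (X Z : Matrix (Fin 2) (Fin 2) ℂ)
    (hX : X = !![0, 1; 1, 0]) (hZ : Z = !![1, 0; 0, -1])
    (M : Matrix (Fin 2 × Fin n) (Fin 2 × Fin n) ℂ)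
    (hM : M = (1 + (m₁ : ℂ) • X) ⊗ₖ H +
        (m₂ : ℂ) • ((1 - Z) ⊗ₖ (1 : Matrix (Fin n) (Fin n) ℂ)))
    (v : Fin 2 × Fin n → ℂ) (hv : v = fun p => if p.1 = 0 then ψ₀ p.2 else 0) :
    (∀ u : Fin 2 × Fin n → ℂ, 0 ≤ (cinner u (M.mulVec u)).re) ∧
      M.mulVec v = 0 := by
  obtain rfl : X = pauliX := hX
  obtain rfl : Z = pauliZ := hZ
  have hXpsd : (1 + (m₁ : ℂ) • pauliX : Matrix (Fin 2) (Fin 2) ℂ).PosSemidef :=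
    isHermitian_pauliX.posSemidef_one_add_smul_of_mul_self_eq_one pauliX_mul_self hm₁
  have hZpsd : (1 - pauliZ : Matrix (Fin 2) (Fin 2) ℂ).PosSemidef :=
    isHermitian_pauliZ.posSemidef_one_sub_of_mul_self_eq_one pauliZ_mul_self
  have hHpsd := hHerm.posSemidef_iff_forall_re_cinner_mulVec_nonneg.mpr hPSD
  have hMpsd : M.PosSemidef := hM ▸ (hXpsd.kronecker hHpsd).add
    ((hZpsd.kronecker PosSemidef.one).smul (Complex.zero_le_real.mpr hm₂))
  refine ⟨hMpsd.isHermitian.posSemidef_iff_forall_re_cinner_mulVec_nonneg.mp hMpsd, ?_⟩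
  have hv' : v = fun p => (Pi.single 0 1 : Fin 2 → ℂ) p.1 * ψ₀ p.2 := by
    ext ⟨i, j⟩; fin_cases i <;> simp [hv]
  rw [hM, hv', add_mulVec, smul_mulVec, kronecker_mulVec_kronecker, kronecker_mulVec_kronecker,
    hker, one_sub_pauliZ_mulVec_single_zero]
  ext; simp
end
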